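/- Let b* be the baseline b*_t(s,a) = q_{π,t}(s,a). For every baseline function b, every time t, and every (s,a): u^b_{π,t}(s,a) ≥ u^{b*}_{π,t}(s,a), and consequently Λ^b ⊆ Λ^{b*}, where Λ^c = {μ : ∀t,s,a, μ_t(a|s)=0 ⟹ π_t(a|s)·u^c_{π,t}(s,a)=0} for a baseline c. -/

import Mathlib

open Finset

namespace DOpt

variable {S A : Type}

/-- A time-indexed policy: for each time step and state, a probability distribution on actions. -/
def IsPolicy [Fintype A] (μ : ℕ → S → A → ℝ) : Prop :=
  ∀ t s, (∀ a, 0 ≤ μ t s a) ∧ ∑ a, μ t s a = 1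

/-- A transition probability kernel on the finite state space. -/
def IsKernel [Fintype S] (p : S → A → S → ℝ) : Prop :=
  ∀ s a, (∀ s', 0 ≤ p s a s') ∧ ∑ s', p s a s' = 1

/-- Action value `q_{π,t}(s,a)` computed with `n` remaining transitions after time `t`
(`n = T - 1 - t` in a horizon-`T` MDP). -/
noncomputable def qval [Fintype S] [Fintype A] (p : S → A → S → ℝ) (π : ℕ → S → A → ℝ)
    (r : S → A → ℝ) : ℕ → ℕ → S → A → ℝ
  | 0, _, s, a => r s a
  | n + 1, t, s, a =>
      r s a + ∑ s', p s a s' * ∑ a', π (t + 1) s' a' * qval p π r n (t + 1) s' a'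

/-- `q_{π,t}(s,a)` in the horizon-`T` MDP. -/
noncomputable def qf [Fintype S] [Fintype A] (T : ℕ) (p : S → A → S → ℝ)
    (π : ℕ → S → A → ℝ) (r : S → A → ℝ) (t : ℕ) (s : S) (a : A) : ℝ :=
  qval p π r (T - 1 - t) t s a

/-- `v_{π,t}(s) = Σ_a π_t(a|s) q_{π,t}(s,a)`. -/
noncomputable def vf [Fintype S] [Fintype A] (T : ℕ) (p : S → A → S → ℝ)
    (π : ℕ → S → A → ℝ) (r : S → A → ℝ) (t : ℕ) (s : S) : ℝ :=
  ∑ a, π t s a * qf T p π r t s a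

/-- `ν_{π,t}(s,a) = Var_{s' ∼ p(·|s,a)}(v_{π,t+1}(s'))` for `t ≤ T-2`, and `0` at `t = T-1`. -/
noncomputable def nuf [Fintype S] [Fintype A] (T : ℕ) (p : S → A → S → ℝ)
    (π : ℕ → S → A → ℝ) (r : S → A → ℝ) (t : ℕ) (s : S) (a : A) : ℝ :=
  if t + 2 ≤ T then
    (∑ s', p s a s' * (vf T p π r (t + 1) s') ^ 2) -
      (∑ s', p s a s' * vf T p π r (t + 1) s') ^ 2
  else 0

/-- Trajectories with `n` further transitions after the first action:
`(a_t, s_{t+1}, a_{t+1}, …, s_{t+n}, a_{t+n})`. -/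
def Traj (S A : Type) : ℕ → Type
  | 0 => A
  | n + 1 => A × S × Traj S A n

/-- Expectation, over trajectories generated by the behavior policy `μ` starting at time `t`
in state `s` with `n` further transitions, of a function `f` of the trajectory. -/
noncomputable def Exp [Fintype S] [Fintype A] (p : S → A → S → ℝ) (μ : ℕ → S → A → ℝ) :
    (n : ℕ) → ℕ → S → (Traj S A n → ℝ) → ℝ
  | 0, t, s, f => ∑ a, μ t s a * f a
  | n + 1, t, s, f =>
      ∑ a, μ t s a * ∑ s', p s a s' * Exp p μ n (t + 1) s' (fun τ => f (a, s', τ))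

/-- Conditional variance of a function of the trajectory, given `S_t = s`. -/
noncomputable def Var [Fintype S] [Fintype A] (p : S → A → S → ℝ) (μ : ℕ → S → A → ℝ)
    (n : ℕ) (t : ℕ) (s : S) (f : Traj S A n → ℝ) : ℝ :=
  Exp p μ n t s (fun τ => (f τ) ^ 2) - (Exp p μ n t s f) ^ 2

/-- `b̄_t(s) = Σ_a π_t(a|s) b_t(s,a)`. -/
noncomputable def bbar [Fintype A] (π : ℕ → S → A → ℝ) (b : ℕ → S → A → ℝ)
    (t : ℕ) (s : S) : ℝ :=
  ∑ a, π t s a * b t s a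

/-- The per-decision importance-sampling estimator `G^b` with baseline `b`, target policy `π`
and behavior policy `μ`, as a function of the trajectory from time `t` (with `n` further
transitions, `n = T - 1 - t`). -/
noncomputable def Gest [Fintype S] [Fintype A] (π μ : ℕ → S → A → ℝ) (r : S → A → ℝ)
    (b : ℕ → S → A → ℝ) : (n : ℕ) → ℕ → S → Traj S A n → ℝ
  | 0, t, s, a => (π t s a / μ t s a) * (r s a - b t s a) + bbar π b t s
  | n + 1, t, s, (a, s', τ) =>
      (π t s a / μ t s a) * (r s a + Gest π μ r b n (t + 1) s' τ - b t s a) + bbar π b t s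

/-- Normalization of a weight vector into a probability distribution; the uniform distribution
when the total weight vanishes. -/
noncomputable def normPol [Fintype A] (w : A → ℝ) (a : A) : ℝ :=
  if (∑ a', w a') = 0 then ((Fintype.card A : ℝ))⁻¹ else w a / ∑ a', w a'

/-- `u_{π,t}(s,a)` (with baseline `b`), defined backwards in time together with the optimal
behavior policy `μ*`; the first argument is the number `n = T - 1 - t` of remaining
transitions after time `t`. -/
noncomputable def uAux [Fintype S] [Fintype A] (T : ℕ) (p : S → A → S → ℝ)
    (π : ℕ → S → A → ℝ) (r : S → A → ℝ) (b : ℕ → S → A → ℝ) :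
    ℕ → ℕ → S → A → ℝ
  | 0, t, s, a => (qf T p π r t s a - b t s a) ^ 2
  | n + 1, t, s, a =>
      (qf T p π r t s a - b t s a) ^ 2 + nuf T p π r t s a +
        ∑ s', p s a s' *
          Var p
            (fun t' s₁ a₁ => normPol (fun a₂ =>
              π t' s₁ a₂ * Real.sqrt (uAux T p π r b (n - (t' - (t + 1))) t' s₁ a₂)) a₁)
            n (t + 1) s'
            (Gest π
              (fun t' s₁ a₁ => normPol (fun a₂ =>
                π t' s₁ a₂ * Real.sqrt (uAux T p π r b (n - (t' - (t + 1))) t' s₁ a₂)) a₁)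
              r b n (t + 1) s')
  termination_by n => n
  decreasing_by all_goals omega

/-- `u_{π,t}(s,a)` in the horizon-`T` MDP, with baseline `b`. -/
noncomputable def uf [Fintype S] [Fintype A] (T : ℕ) (p : S → A → S → ℝ)
    (π : ℕ → S → A → ℝ) (r : S → A → ℝ) (b : ℕ → S → A → ℝ) (t : ℕ) (s : S) (a : A) : ℝ :=
  uAux T p π r b (T - 1 - t) t s a

/-- The optimal behavior policy `μ*_t(a|s) ∝ π_t(a|s) √(u_{π,t}(s,a))` tailored to the
baseline `b` (uniform when all the weights vanish). -/
noncomputable def mustar [Fintype S] [Fintype A] (T : ℕ) (p : S → A → S → ℝ)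
    (π : ℕ → S → A → ℝ) (r : S → A → ℝ) (b : ℕ → S → A → ℝ) (t : ℕ) (s : S) (a : A) : ℝ :=
  normPol (fun a' => π t s a' * Real.sqrt (uf T p π r b t s a')) a

/-- Conditional expectation `E[G^b(τ^μ_{t:T-1}) | S_t = s]`. -/
noncomputable def ExpG [Fintype S] [Fintype A] (T : ℕ) (p : S → A → S → ℝ)
    (π μ : ℕ → S → A → ℝ) (r : S → A → ℝ) (b : ℕ → S → A → ℝ) (t : ℕ) (s : S) : ℝ :=
  Exp p μ (T - 1 - t) t s (Gest π μ r b (T - 1 - t) t s)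

/-- Conditional variance `Var(G^b(τ^μ_{t:T-1}) | S_t = s)`. -/
noncomputable def VarG [Fintype S] [Fintype A] (T : ℕ) (p : S → A → S → ℝ)
    (π μ : ℕ → S → A → ℝ) (r : S → A → ℝ) (b : ℕ → S → A → ℝ) (t : ℕ) (s : S) : ℝ :=
  Var p μ (T - 1 - t) t s (Gest π μ r b (T - 1 - t) t s)

/-- Membership in the enlarged policy-search space
`Λ = {μ : ∀ t,s,a, μ_t(a|s) = 0 → π_t(a|s)·u_{π,t}(s,a) = 0}`. -/
def inLambda [Fintype S] [Fintype A] (T : ℕ) (p : S → A → S → ℝ)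
    (π : ℕ → S → A → ℝ) (r : S → A → ℝ) (b : ℕ → S → A → ℝ) (μ : ℕ → S → A → ℝ) : Prop :=
  ∀ t s a, t < T → μ t s a = 0 → π t s a * uf T p π r b t s a = 0


/-- The optimal baseline `b*_t(s,a) = q_{π,t}(s,a)`. -/
noncomputable def bstar [Fintype S] [Fintype A] (T : ℕ) (p : S → A → S → ℝ)
    (π : ℕ → S → A → ℝ) (r : S → A → ℝ) : ℕ → S → A → ℝ :=
  fun t s a => qf T p π r t s a

/-- The zero baseline: with it, `Gest` is the plain PDIS estimator `G^{PDIS}`. -/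
def zerob : ℕ → S → A → ℝ := fun _ _ _ => 0

/-!
If a behavior policy `μ` covers `π` (it never vanishes where `π_t(a|s) (q_t(s,a) - c_t(s,a)) ≠ 0`),
the estimator `G^c` is unbiased, and centering it at `c̄` instead of at its mean gives
`Var_μ(G^c_t | s) = ∑_a μ(a) ρ(a)² U(a) - (v_t(s) - c̄_t(s))²`, where `U` is the quantity
`(q - c)² + ν + ∑_{s'} p(s') Var(G^c_{t+1} | s')` recursing in the definition of `u^c`.
Since `u^c ≥ (q - c)²`, the policy `μ^{*,c} ∝ π √u^c` covers `π`, and for it the sum collapses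
to `(∑_a π √u^c)²`. Backward induction then gives `u^{b*}_t + (q_t - b_t)² ≤ u^b_t`: the `ν` terms
agree, and the variance terms compare by Minkowski's inequality in `ℝ²`,
`(∑ π √u^{b*})² + (v - b̄)² ≤ (∑ π √(u^{b*} + (q - b)²))² ≤ (∑ π √u^b)²`,
because `v - b̄ = ∑ π (q - b)`.
-/

section WeightedSum

variable {ι : Type} [Fintype ι]

theorem sum_mul_add_sq {w : ι → ℝ} (hw : ∑ i, w i = 1) (f : ι → ℝ) (β : ℝ) :
    ∑ i, w i * (f i + β) ^ 2 =
      (∑ i, w i * f i ^ 2 - (∑ i, w i * f i) ^ 2) + (∑ i, w i * f i + β) ^ 2 := by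
  have expand : ∀ i, w i * (f i + β) ^ 2 = w i * f i ^ 2 + 2 * β * (w i * f i) + β ^ 2 * w i :=
    fun i => by ring
  simp only [expand, sum_add_distrib, ← mul_sum, hw]
  ring

theorem sum_mul_affine {w : ι → ℝ} (hw : ∑ i, w i = 1) (f : ι → ℝ) (C D : ℝ) :
    ∑ i, w i * (C * f i + D) = C * ∑ i, w i * f i + D := by
  simp only [mul_add, sum_add_distrib, ← sum_mul, hw, one_mul, mul_left_comm _ C, ← mul_sum]

theorem sq_sum_mul_le_sum_mul_sq {w : ι → ℝ} (hw₀ : ∀ i, 0 ≤ w i) (hw : ∑ i, w i = 1)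
    (f : ι → ℝ) : (∑ i, w i * f i) ^ 2 ≤ ∑ i, w i * f i ^ 2 := by
  have h := sum_mul_add_sq hw f (-∑ i, w i * f i)
  rw [add_neg_cancel, zero_pow two_ne_zero, add_zero] at h
  have : 0 ≤ ∑ i, w i * (f i + -∑ j, w j * f j) ^ 2 :=
    sum_nonneg fun i _ => mul_nonneg (hw₀ i) (sq_nonneg _)
  linarith

theorem sqrt_sq_sum_add_sq_sum_le (x y : ι → ℝ) :
    √((∑ i, x i) ^ 2 + (∑ i, y i) ^ 2) ≤ ∑ i, √(x i ^ 2 + y i ^ 2) := by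
  have h := norm_sum_le univ fun i => (⟨x i, y i⟩ : ℂ)
  simpa only [Complex.norm_eq_sqrt_sq_add_sq, Complex.re_sum, Complex.im_sum] using h

theorem sq_sum_mul_sqrt_add_sq_sum_mul_le {w x y z : ι → ℝ} (hw : ∀ i, 0 ≤ w i)
    (hx : ∀ i, 0 ≤ x i) (hz : ∀ i, x i + y i ^ 2 ≤ z i) :
    (∑ i, w i * √(x i)) ^ 2 + (∑ i, w i * y i) ^ 2 ≤ (∑ i, w i * √(z i)) ^ 2 := by
  have minkowski : √((∑ i, w i * √(x i)) ^ 2 + (∑ i, w i * y i) ^ 2) ≤ ∑ i, w i * √(z i) := by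
    refine (sqrt_sq_sum_add_sq_sum_le _ _).trans (sum_le_sum fun i _ => ?_)
    rw [mul_pow, mul_pow, Real.sq_sqrt (hx i), ← mul_add, Real.sqrt_mul (sq_nonneg _),
      Real.sqrt_sq (hw i)]
    exact mul_le_mul_of_nonneg_left (Real.sqrt_le_sqrt (hz i)) (hw i)
  exact (Real.sqrt_le_iff.mp minkowski).2

end WeightedSum

section Expectation

variable {S A : Type} [Fintype S] [Fintype A] {p : S → A → S → ℝ} {μ : ℕ → S → A → ℝ}

theorem Exp_add {n t : ℕ} {s : S} (f g : Traj S A n → ℝ) :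
    Exp p μ n t s (fun τ => f τ + g τ) = Exp p μ n t s f + Exp p μ n t s g := by
  induction n generalizing t s with
  | zero => simp only [Exp, mul_add, sum_add_distrib]
  | succ n ih => simp only [Exp, ih, mul_add, sum_add_distrib]

theorem Exp_const_mul {n t : ℕ} {s : S} (C : ℝ) (f : Traj S A n → ℝ) :
    Exp p μ n t s (fun τ => C * f τ) = C * Exp p μ n t s f := by
  induction n generalizing t s with
  | zero => simp only [Exp, mul_sum, mul_left_comm C]
  | succ n ih => simp only [Exp, ih, mul_sum, mul_left_comm C]

theorem Exp_const (hp : IsKernel p) (hμ : IsPolicy μ) {n t : ℕ} {s : S} (C : ℝ) :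
    Exp p μ n t s (fun _ => C) = C := by
  induction n generalizing t s with
  | zero => simp only [Exp, ← sum_mul, (hμ t s).2, one_mul]
  | succ n ih => simp only [Exp, ih, ← sum_mul, (hp _ _).2, (hμ t s).2, one_mul]

theorem Exp_nonneg (hp : IsKernel p) (hμ : IsPolicy μ) {n t : ℕ} {s : S}
    {f : Traj S A n → ℝ} (hf : ∀ τ, 0 ≤ f τ) : 0 ≤ Exp p μ n t s f := by
  induction n generalizing t s with
  | zero => exact sum_nonneg fun a _ => mul_nonneg ((hμ t s).1 a) (hf a)
  | succ n ih =>
    exact sum_nonneg fun a _ => mul_nonneg ((hμ t s).1 a) <|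
      sum_nonneg fun s' _ => mul_nonneg ((hp s a).1 s') (ih fun τ => hf _)

theorem Exp_affine (hp : IsKernel p) (hμ : IsPolicy μ) {n t : ℕ} {s : S}
    (f : Traj S A n → ℝ) {g : Traj S A n → ℝ} (C D : ℝ) (hg : ∀ τ, g τ = C * f τ + D) :
    Exp p μ n t s g = C * Exp p μ n t s f + D := by
  rw [funext hg, Exp_add, Exp_const_mul, Exp_const hp hμ]

theorem Exp_sq_add (hp : IsKernel p) (hμ : IsPolicy μ) {n t : ℕ} {s : S}
    (f : Traj S A n → ℝ) (β : ℝ) :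
    Exp p μ n t s (fun τ => (f τ + β) ^ 2) = Var p μ n t s f + (Exp p μ n t s f + β) ^ 2 := by
  have expand : ∀ τ, (f τ + β) ^ 2 = f τ ^ 2 + (2 * β * f τ + β ^ 2) := fun τ => by ring
  rw [funext expand, Exp_add, Exp_affine hp hμ f (2 * β) (β ^ 2) fun _ => rfl, Var]
  ring

theorem Var_nonneg (hp : IsKernel p) (hμ : IsPolicy μ) {n t : ℕ} {s : S}
    (f : Traj S A n → ℝ) : 0 ≤ Var p μ n t s f := by
  have h := Exp_sq_add hp hμ f (-Exp p μ n t s f) (t := t) (s := s)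
  rw [add_neg_cancel, zero_pow two_ne_zero, add_zero] at h
  exact h ▸ Exp_nonneg hp hμ fun τ => sq_nonneg _

end Expectation

theorem mul_div_mul_cancel_of_imp {x y d : ℝ} (h : x = 0 → y * d = 0) :
    x * (y / x * d) = y * d := by
  rcases eq_or_ne x 0 with hx | hx
  · rw [hx, zero_mul, h hx]
  · field_simp

section NormPol

variable {A : Type} [Fintype A]

theorem normPol_nonneg {w : A → ℝ} (hw : ∀ a, 0 ≤ w a) (a : A) : 0 ≤ normPol w a := by
  unfold normPol
  split_ifs
  · positivity
  · exact div_nonneg (hw a) (sum_nonneg fun i _ => hw i)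

theorem sum_normPol [Nonempty A] (w : A → ℝ) : ∑ a, normPol w a = 1 := by
  unfold normPol
  split_ifs with h
  · rw [sum_const, card_univ, nsmul_eq_mul,
      mul_inv_cancel₀ (by exact_mod_cast Fintype.card_ne_zero)]
  · rw [← sum_div, div_self h]

theorem eq_zero_of_normPol_eq_zero [Nonempty A] {w : A → ℝ} {a : A} (h : normPol w a = 0) :
    w a = 0 := by
  unfold normPol at h
  split_ifs at h with hw
  · exact absurd h (inv_ne_zero (by exact_mod_cast Fintype.card_ne_zero))
  · exact (div_eq_zero_iff.mp h).resolve_right hw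

theorem sum_normPol_mul_div_sq {π' u : A → ℝ} (hπ' : ∀ a, 0 ≤ π' a) (hu : ∀ a, 0 ≤ u a) :
    ∑ a, normPol (fun x => π' x * √(u x)) a *
        ((π' a / normPol (fun x => π' x * √(u x)) a) ^ 2 * u a) =
      (∑ a, π' a * √(u a)) ^ 2 := by
  set w : A → ℝ := fun x => π' x * √(u x) with hw
  have hw₀ : ∀ a, 0 ≤ w a := fun a => mul_nonneg (hπ' a) (Real.sqrt_nonneg _)
  have hterm : ∀ a, normPol w a * ((π' a / normPol w a) ^ 2 * u a) = w a * ∑ x, w x := by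
    intro a
    have hsq : π' a ^ 2 * u a = w a ^ 2 := by rw [hw, mul_pow, Real.sq_sqrt (hu a)]
    have hdiv : normPol w a * ((π' a / normPol w a) ^ 2 * u a) =
        w a ^ 2 * (normPol w a / normPol w a ^ 2) := by rw [← hsq]; ring
    rw [hdiv]
    rcases eq_or_ne (w a) 0 with hwa | hwa
    · rw [hwa]; ring
    have hW : ∑ x, w x ≠ 0 :=
      (lt_of_lt_of_le ((hw₀ a).lt_of_ne' hwa) (single_le_sum (fun x _ => hw₀ x) (mem_univ a))).ne'
    rw [normPol, if_neg hW]
    field_simp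
  rw [sum_congr rfl fun a _ => hterm a, ← sum_mul, sq]

end NormPol

section ValueFunctions

variable {S A : Type} [Fintype S] [Fintype A] {T t : ℕ} {p : S → A → S → ℝ}
  {π : ℕ → S → A → ℝ} {r : S → A → ℝ}

theorem qf_of_le (h : T ≤ t + 1) (s : S) (a : A) : qf T p π r t s a = r s a := by
  rw [qf, show T - 1 - t = 0 by omega, qval]

theorem qf_eq_add_sum_vf (h : t + 2 ≤ T) (s : S) (a : A) :
    qf T p π r t s a = r s a + ∑ s', p s a s' * vf T p π r (t + 1) s' := by
  obtain ⟨n, hn⟩ : ∃ n, T - 1 - t = n + 1 := ⟨T - 2 - t, by omega⟩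
  simp only [qf, vf, hn, qval, show T - 1 - (t + 1) = n by omega]

theorem nuf_nonneg (hp : IsKernel p) (s : S) (a : A) : 0 ≤ nuf T p π r t s a := by
  unfold nuf
  split_ifs
  · exact sub_nonneg.mpr (sq_sum_mul_le_sum_mul_sq (hp s a).1 (hp s a).2 _)
  · exact le_rfl

theorem vf_sub_bbar (c : ℕ → S → A → ℝ) (s : S) :
    vf T p π r t s - bbar π c t s = ∑ a, π t s a * (qf T p π r t s a - c t s a) := by
  simp only [vf, bbar, mul_sub, sum_sub_distrib]

end ValueFunctions

section PolicyCongr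

variable {S A : Type} [Fintype S] [Fintype A] {p : S → A → S → ℝ} {μ μ' : ℕ → S → A → ℝ}

theorem Exp_congr_policy {n t : ℕ} {s : S} (f : Traj S A n → ℝ)
    (h : ∀ k ≤ n, μ (t + k) = μ' (t + k)) : Exp p μ n t s f = Exp p μ' n t s f := by
  induction n generalizing t s with
  | zero =>
    have h₀ : μ t = μ' t := h 0 le_rfl
    simp only [Exp, h₀]
  | succ n ih =>
    have h₀ : μ t = μ' t := h 0 (Nat.zero_le _)
    have h' : ∀ k ≤ n, μ (t + 1 + k) = μ' (t + 1 + k) := fun k hk => by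
      simpa only [add_assoc, add_comm 1 k] using h (k + 1) (by omega)
    simp only [Exp, h₀, ih _ h']

theorem Gest_congr_policy (π : ℕ → S → A → ℝ) (r : S → A → ℝ) (c : ℕ → S → A → ℝ)
    {n t : ℕ} {s : S} (h : ∀ k ≤ n, μ (t + k) = μ' (t + k)) :
    Gest π μ r c n t s = Gest π μ' r c n t s := by
  induction n generalizing t s with
  | zero =>
    have h₀ : μ t = μ' t := h 0 le_rfl
    funext a
    simp only [Gest, h₀]
  | succ n ih =>
    have h₀ : μ t = μ' t := h 0 (Nat.zero_le _)
    have h' : ∀ k ≤ n, μ (t + 1 + k) = μ' (t + 1 + k) := fun k hk => by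
      simpa only [add_assoc, add_comm 1 k] using h (k + 1) (by omega)
    funext ⟨a, s', τ⟩
    simp only [Gest, h₀, ih h']

theorem Var_Gest_congr_policy (π : ℕ → S → A → ℝ) (r : S → A → ℝ) (c : ℕ → S → A → ℝ)
    {n t : ℕ} {s : S} (h : ∀ k ≤ n, μ (t + k) = μ' (t + k)) :
    Var p μ n t s (Gest π μ r c n t s) = Var p μ' n t s (Gest π μ' r c n t s) := by
  simp only [Var, Gest_congr_policy π r c h, Exp_congr_policy _ h]

end PolicyCongr

section OptimalBehavior

variable {S A : Type} [Fintype S] [Fintype A] {T t : ℕ} {p : S → A → S → ℝ}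
  {π : ℕ → S → A → ℝ} {r : S → A → ℝ} {c : ℕ → S → A → ℝ}

theorem uf_of_le (h : T ≤ t + 1) (s : S) (a : A) :
    uf T p π r c t s a = (qf T p π r t s a - c t s a) ^ 2 := by
  rw [uf, show T - 1 - t = 0 by omega, uAux]

theorem uf_of_add_two_eq {n : ℕ} (h : t + n + 2 = T) (s : S) (a : A) :
    uf T p π r c t s a = (qf T p π r t s a - c t s a) ^ 2 + nuf T p π r t s a +
      ∑ s', p s a s' * Var p (mustar T p π r c) n (t + 1) s'
        (Gest π (mustar T p π r c) r c n (t + 1) s') := by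
  rw [uf, show T - 1 - t = n + 1 by omega, uAux]
  congr 1
  -- `uAux` recomputes `μ*` inline, with its own time shift: it is `mustar` at every later time.
  refine sum_congr rfl fun s' _ => congrArg _ (Var_Gest_congr_policy π r c fun k hk => ?_)
  funext s₁ a₁
  simp only [mustar, uf, show n - (t + 1 + k - (t + 1)) = T - 1 - (t + 1 + k) by omega]

theorem mustar_isPolicy [Nonempty A] (hπ : IsPolicy π) : IsPolicy (mustar T p π r c) :=
  fun t s => ⟨normPol_nonneg fun a => mul_nonneg ((hπ t s).1 a) (Real.sqrt_nonneg _),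
    sum_normPol _⟩

theorem sq_sub_le_uf [Nonempty A] (hp : IsKernel p) (hπ : IsPolicy π) (s : S) (a : A) :
    (qf T p π r t s a - c t s a) ^ 2 ≤ uf T p π r c t s a := by
  obtain h | ⟨n, h⟩ : T ≤ t + 1 ∨ ∃ n, t + n + 2 = T :=
    (le_or_gt T (t + 1)).imp_right fun h => ⟨T - t - 2, by omega⟩
  · exact (uf_of_le h s a).ge
  · rw [uf_of_add_two_eq h]
    have hvar : 0 ≤ ∑ s', p s a s' * Var p (mustar T p π r c) n (t + 1) s'
        (Gest π (mustar T p π r c) r c n (t + 1) s') :=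
      sum_nonneg fun s' _ => mul_nonneg ((hp s a).1 s') (Var_nonneg hp (mustar_isPolicy hπ) _)
    linarith [nuf_nonneg hp (T := T) (π := π) (r := r) (t := t) s a]

theorem uf_nonneg [Nonempty A] (hp : IsKernel p) (hπ : IsPolicy π) (s : S) (a : A) :
    0 ≤ uf T p π r c t s a :=
  (sq_nonneg _).trans (sq_sub_le_uf hp hπ s a)

end OptimalBehavior

def Covers [Fintype S] [Fintype A] (T : ℕ) (p : S → A → S → ℝ) (π : ℕ → S → A → ℝ)
    (r : S → A → ℝ) (c μ : ℕ → S → A → ℝ) : Prop :=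
  ∀ t s a, μ t s a = 0 → π t s a * (qf T p π r t s a - c t s a) = 0

section Estimator

variable {S A : Type} [Fintype S] [Fintype A] {T t : ℕ} {p : S → A → S → ℝ}
  {π μ : ℕ → S → A → ℝ} {r : S → A → ℝ} {c : ℕ → S → A → ℝ}

theorem sum_mul_ratio_add_bbar (hμ : IsPolicy μ) (hcov : Covers T p π r c μ) (s : S) :
    ∑ a, μ t s a * (π t s a / μ t s a * (qf T p π r t s a - c t s a) + bbar π c t s) =
      vf T p π r t s := by
  simp only [mul_add, sum_add_distrib, ← sum_mul, (hμ t s).2, one_mul,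
    mul_div_mul_cancel_of_imp (hcov t s _), ← vf_sub_bbar]
  ring

theorem Exp_Gest (hp : IsKernel p) (hμ : IsPolicy μ) (hcov : Covers T p π r c μ) {n : ℕ}
    (h : t + n + 1 = T) (s : S) : Exp p μ n t s (Gest π μ r c n t s) = vf T p π r t s := by
  induction n generalizing t s with
  | zero =>
    rw [← sum_mul_ratio_add_bbar hμ hcov s]
    simp only [Exp, Gest, qf_of_le (show T ≤ t + 1 by omega)]
  | succ n ih =>
    rw [← sum_mul_ratio_add_bbar hμ hcov s]
    refine sum_congr rfl fun a _ => congrArg _ ?_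
    have hnext : ∀ s', Exp p μ n (t + 1) s' (fun τ => Gest π μ r c (n + 1) t s (a, s', τ)) =
        π t s a / μ t s a * vf T p π r (t + 1) s' +
          (π t s a / μ t s a * (r s a - c t s a) + bbar π c t s) := fun s' => by
      rw [Exp_affine hp hμ (Gest π μ r c n (t + 1) s') (π t s a / μ t s a)
          (π t s a / μ t s a * (r s a - c t s a) + bbar π c t s) fun τ => by simp only [Gest]; ring,
        ih (by omega)]
    rw [sum_congr rfl fun s' _ => by rw [hnext], sum_mul_affine (hp s a).2,
      qf_eq_add_sum_vf (show t + 2 ≤ T by omega)]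
    ring

theorem Var_Gest (hp : IsKernel p) (hμ : IsPolicy μ) (hcov : Covers T p π r c μ) {n : ℕ}
    (h : t + n + 1 = T) (s : S) :
    Var p μ n t s (Gest π μ r c n t s) =
      Exp p μ n t s (fun τ => (Gest π μ r c n t s τ - bbar π c t s) ^ 2) -
        (vf T p π r t s - bbar π c t s) ^ 2 := by
  have hshift := Exp_sq_add hp hμ (Gest π μ r c n t s) (-bbar π c t s) (t := t) (s := s)
  simp only [← sub_eq_add_neg, Exp_Gest hp hμ hcov h] at hshift
  linarith

theorem Exp_sq_Gest_zero_sub_bbar (h : T ≤ t + 1) (s : S) :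
    Exp p μ 0 t s (fun τ => (Gest π μ r c 0 t s τ - bbar π c t s) ^ 2) =
      ∑ a, μ t s a * ((π t s a / μ t s a) ^ 2 * (qf T p π r t s a - c t s a) ^ 2) := by
  simp only [Exp, Gest, add_sub_cancel_right, qf_of_le h, mul_pow]

theorem Exp_sq_Gest_succ_sub_bbar (hp : IsKernel p) (hμ : IsPolicy μ)
    (hcov : Covers T p π r c μ) {n : ℕ} (h : t + n + 2 = T) (s : S) :
    Exp p μ (n + 1) t s (fun τ => (Gest π μ r c (n + 1) t s τ - bbar π c t s) ^ 2) =
      ∑ a, μ t s a * ((π t s a / μ t s a) ^ 2 * ((qf T p π r t s a - c t s a) ^ 2 +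
        nuf T p π r t s a +
          ∑ s', p s a s' * Var p μ n (t + 1) s' (Gest π μ r c n (t + 1) s'))) := by
  simp only [Exp]
  refine sum_congr rfl fun a _ => congrArg _ ?_
  have hnext : ∀ s', Exp p μ n (t + 1) s'
      (fun τ => (Gest π μ r c (n + 1) t s (a, s', τ) - bbar π c t s) ^ 2) =
        (π t s a / μ t s a) ^ 2 * (Var p μ n (t + 1) s' (Gest π μ r c n (t + 1) s') +
          (vf T p π r (t + 1) s' + (r s a - c t s a)) ^ 2) := fun s' => by
    rw [← Exp_Gest hp hμ hcov (show t + 1 + n + 1 = T by omega) s', ← Exp_sq_add hp hμ,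
      ← Exp_const_mul]
    congr 1
    funext τ
    simp only [Gest]
    ring
  have hkernel := sum_mul_add_sq (hp s a).2 (vf T p π r (t + 1)) (r s a - c t s a)
  rw [sum_congr rfl fun s' _ => by rw [hnext], nuf, if_pos (by omega),
    qf_eq_add_sum_vf (by omega)]
  simp only [mul_left_comm (p s a _), ← mul_sum, mul_add, sum_add_distrib]
  rw [hkernel]
  ring

end Estimator

section OptimalBaseline

variable {S A : Type} [Fintype S] [Fintype A] [Nonempty A] {T t : ℕ} {p : S → A → S → ℝ}
  {π : ℕ → S → A → ℝ} {r : S → A → ℝ} {c : ℕ → S → A → ℝ}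

theorem covers_mustar (hp : IsKernel p) (hπ : IsPolicy π) :
    Covers T p π r c (mustar T p π r c) := by
  intro t s a h
  have hw := eq_zero_of_normPol_eq_zero (w := fun a' => π t s a' * √(uf T p π r c t s a')) h
  rcases mul_eq_zero.mp hw with hπ₀ | hu₀
  · rw [hπ₀, zero_mul]
  · have hq : (qf T p π r t s a - c t s a) ^ 2 ≤ 0 :=
      (sq_sub_le_uf hp hπ s a).trans (Real.sqrt_eq_zero'.mp hu₀)
    rw [(sq_nonpos_iff _).mp hq, mul_zero]

theorem Var_Gest_mustar (hp : IsKernel p) (hπ : IsPolicy π) {n : ℕ} (h : t + n + 1 = T)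
    (s : S) :
    Var p (mustar T p π r c) n t s (Gest π (mustar T p π r c) r c n t s) =
      (∑ a, π t s a * √(uf T p π r c t s a)) ^ 2 - (vf T p π r t s - bbar π c t s) ^ 2 := by
  rw [Var_Gest hp (mustar_isPolicy hπ) (covers_mustar hp hπ) h,
    ← sum_normPol_mul_div_sq (hπ t s).1 fun a => uf_nonneg hp hπ (t := t) (c := c) s a]
  congr 1
  cases n with
  | zero =>
    rw [Exp_sq_Gest_zero_sub_bbar (show T ≤ t + 1 by omega)]
    exact sum_congr rfl fun a _ => by rw [uf_of_le (show T ≤ t + 1 by omega)]; rfl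
  | succ n =>
    rw [Exp_sq_Gest_succ_sub_bbar hp (mustar_isPolicy hπ) (covers_mustar hp hπ)
      (show t + n + 2 = T by omega)]
    exact sum_congr rfl fun a _ => by rw [uf_of_add_two_eq (show t + n + 2 = T by omega)]; rfl

theorem uf_bstar_add_sq_le (hp : IsKernel p) (hπ : IsPolicy π) (b : ℕ → S → A → ℝ) {n : ℕ}
    (h : t + n + 1 = T) (s : S) (a : A) :
    uf T p π r (bstar T p π r) t s a + (qf T p π r t s a - b t s a) ^ 2 ≤ uf T p π r b t s a := by
  have hstar : ∀ t s a, qf T p π r t s a - bstar T p π r t s a = 0 := fun _ _ _ => sub_self _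
  induction n generalizing t s a with
  | zero =>
    simp only [uf_of_le (show T ≤ t + 1 by omega), hstar, zero_pow two_ne_zero, zero_add,
      le_refl]
  | succ n ih =>
    have hvar : ∀ s', Var p (mustar T p π r (bstar T p π r)) n (t + 1) s'
        (Gest π (mustar T p π r (bstar T p π r)) r (bstar T p π r) n (t + 1) s') ≤
        Var p (mustar T p π r b) n (t + 1) s' (Gest π (mustar T p π r b) r b n (t + 1) s') := by
      intro s'
      have hmink := sq_sum_mul_sqrt_add_sq_sum_mul_le (hπ (t + 1) s').1
        (fun a => uf_nonneg hp hπ s' a) (fun a => ih (t := t + 1) (by omega) s' a)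
      rw [Var_Gest_mustar hp hπ (by omega), Var_Gest_mustar hp hπ (by omega), vf_sub_bbar,
        vf_sub_bbar]
      simp only [hstar, mul_zero, sum_const_zero]
      linarith
    have hsum := sum_le_sum fun s' (_ : s' ∈ univ) =>
      mul_le_mul_of_nonneg_left (hvar s') ((hp s a).1 s')
    rw [uf_of_add_two_eq (by omega), uf_of_add_two_eq (by omega), hstar]
    linarith

end OptimalBaseline

theorem u_bstar_le_u_general {S A : Type} [Fintype S] [Fintype A] [Nonempty A]
    (T : ℕ)
    (p : S → A → S → ℝ) (hp : IsKernel p)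
    (r : S → A → ℝ)
    (π : ℕ → S → A → ℝ) (hπ : IsPolicy π)
    (b : ℕ → S → A → ℝ) :
    (∀ (t : ℕ) (s : S) (a : A), t < T →
      uf T p π r (bstar T p π r) t s a ≤ uf T p π r b t s a) ∧
    (∀ μ : ℕ → S → A → ℝ, inLambda T p π r b μ → inLambda T p π r (bstar T p π r) μ) := by
  have hle : ∀ t s a, t < T → uf T p π r (bstar T p π r) t s a ≤ uf T p π r b t s a :=
    fun t s a ht => by
      linarith [uf_bstar_add_sq_le hp hπ b (r := r) (show t + (T - 1 - t) + 1 = T by omega) s a,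
        sq_nonneg (qf T p π r t s a - b t s a)]
  refine ⟨hle, fun μ hμ t s a ht hzero => ?_⟩
  rcases mul_eq_zero.mp (hμ t s a ht hzero) with hπ₀ | hu₀
  · rw [hπ₀, zero_mul]
  · rw [le_antisymm (hu₀ ▸ hle t s a ht) (uf_nonneg hp hπ s a), mul_zero]

/-- with the optimal baseline `b*_t(s,a) = q_{π,t}(s,a)`, for every baseline `b`,
every time `t` and every `(s,a)` one has `u^b_{π,t}(s,a) ≥ u^{b*}_{π,t}(s,a)`, and
consequently `Λ^b ⊆ Λ^{b*}`. -/
theorem u_bstar_le_u {S A : Type} [Fintype S] [Fintype A] [Nonempty A]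
    (T : ℕ) (hT : 1 ≤ T)
    (p : S → A → S → ℝ) (hp : IsKernel p)
    (r : S → A → ℝ)
    (π : ℕ → S → A → ℝ) (hπ : IsPolicy π)
    (b : ℕ → S → A → ℝ) :
    (∀ (t : ℕ) (s : S) (a : A), t < T →
      uf T p π r (bstar T p π r) t s a ≤ uf T p π r b t s a) ∧
    (∀ μ : ℕ → S → A → ℝ, inLambda T p π r b μ → inLambda T p π r (bstar T p π r) μ) :=
  u_bstar_le_u_general T p hp r π hπ b

end DOpt
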